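/- Suppose R* > 0 is such that for every R ≥ R* the first exit time t₁(R) is finite and x_R(t₁(R)) = 0. Then sup { x_R(t) : 0 < t < t₁(R), R* ≤ R ≤ R* + 1 } < +∞. -/

import Mathlib

/-- The arc-length system (1.5): `x' = cos θ`, `r' = sin θ`,
`θ' = ((n-1)/r - (r/2) f'(x²+r²)) cos θ + (x/2) f'(x²+r²) sin θ` on the set `s`. -/
def SolvesSystem (n : ℕ) (f : ℝ → ℝ) (x r θ : ℝ → ℝ) (s : Set ℝ) : Prop :=
  ∀ t ∈ s,
    HasDerivAt x (Real.cos (θ t)) t ∧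
    HasDerivAt r (Real.sin (θ t)) t ∧
    HasDerivAt θ
      ((((n : ℝ) - 1) / r t - r t / 2 * deriv f (x t ^ 2 + r t ^ 2)) * Real.cos (θ t)
        + x t / 2 * deriv f (x t ^ 2 + r t ^ 2) * Real.sin (θ t)) t

/-- None of the exit events `θ = 0`, `θ = -π`, `x = 0`, `r = 0` occurs on `s`. -/
def NoExit (x r θ : ℝ → ℝ) (s : Set ℝ) : Prop :=
  ∀ t ∈ s, θ t ≠ 0 ∧ θ t ≠ -Real.pi ∧ x t ≠ 0 ∧ r t ≠ 0

/-!
Before its exit time a solution has `x > 0`, and at the angles `θ = -π/2, π/2, 3π/2` the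
equation reduces to `θ' = (x/2) f' sin θ`, whose sign forbids crossing them outwards; together
with `-π < θ` this makes `cos θ ≤ 0` forward invariant, after which `x` decreases. Since `x_R` returns
to `0`, `cos θ_R < 0` at some time `t₁`. Up to `t₁` the solutions for nearby radii stay close to
that of `R` by Grönwall, so their `x` is bounded there and their `cos θ` is still negative at `t₁`.
Compactness of `[R*, R* + 1]` turns these local bounds into a global one.
-/

open Set Metric Real
open scoped Topology NNReal

lemma Prod.abs_sub_fst_le_dist {α : Type*} [PseudoMetricSpace α] (p q : ℝ × α) :
    |p.1 - q.1| ≤ dist p q := by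
  rw [← Real.dist_eq, Prod.dist_eq]
  exact le_max_left _ _

lemma Prod.abs_sub_snd_snd_le_dist {α β : Type*} [PseudoMetricSpace α] [PseudoMetricSpace β]
    (p q : α × β × ℝ) : |p.2.2 - q.2.2| ≤ dist p q := by
  rw [← Real.dist_eq, Prod.dist_eq, Prod.dist_eq]
  exact (le_max_right _ _).trans (le_max_right _ _)

lemma IsPreconnected.forall_pos_of_ne_zero {X : Type*} [TopologicalSpace X] {s : Set X}
    (hs : IsPreconnected s) {g : X → ℝ} (hg : ContinuousOn g s) (hne : ∀ u ∈ s, g u ≠ 0)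
    {a : X} (ha : a ∈ s) (hga : 0 < g a) : ∀ t ∈ s, 0 < g t := by
  intro t ht
  by_contra! hgt
  obtain ⟨u, hu, hgu⟩ := hs.intermediate_value ht ha hg ⟨hgt, hga.le⟩
  exact hne u hu hgu

lemma HasDerivAt.exists_mem_Ioo_pos {g : ℝ → ℝ} {g' a b : ℝ} (hg : HasDerivAt g g' a)
    (hg' : 0 < g') (hga : g a = 0) (hab : a < b) : ∃ s ∈ Ioo a b, 0 < g s := by
  have hslope : ∀ᶠ s in 𝓝[>] a, 0 < slope g a s :=
    ((hasDerivWithinAt_iff_tendsto_slope' self_notMem_Ioi).1 hg.hasDerivWithinAt).eventually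
      (lt_mem_nhds hg')
  obtain ⟨s, hs, hsab⟩ := (hslope.and (Ioo_mem_nhdsGT hab)).exists
  rw [slope_def_field, hga, sub_zero] at hs
  exact ⟨s, hsab, (div_pos_iff_of_pos_right (sub_pos.2 hsab.1)).1 hs⟩

lemma IsCompact.exists_forall_of_local {X : Type*} [TopologicalSpace X] {K : Set X}
    (hK : IsCompact K) {P : X → ℝ → Prop} (hP : ∀ x B B', B ≤ B' → P x B → P x B')
    (hloc : ∀ x ∈ K, ∃ U ∈ 𝓝[K] x, ∃ B, ∀ y ∈ U, P y B) : ∃ B, ∀ x ∈ K, P x B := by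
  refine hK.induction_on (p := fun s => ∃ B, ∀ x ∈ s, P x B) ⟨0, by simp⟩
    (fun s t hst ⟨B, hB⟩ => ⟨B, fun x hx => hB x (hst hx)⟩) ?_ hloc
  rintro s t ⟨B, hB⟩ ⟨B', hB'⟩
  refine ⟨max B B', fun x hx => hx.elim ?_ ?_⟩
  · exact fun hx => hP x _ _ (le_max_left _ _) (hB x hx)
  · exact fun hx => hP x _ _ (le_max_right _ _) (hB' x hx)

/-- Until `z` first reaches distance `ε` from `y`, both stay in `s`; Grönwall on that interval
already gives a distance `< ε` at that first time. -/
theorem dist_lt_of_trajectories_ODE_of_closedBall_subset {E : Type*} [NormedAddCommGroup E]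
    [NormedSpace ℝ E] {v : ℝ → E → E} {s : Set E} {L : ℝ≥0} {y z : ℝ → E} {a b ε : ℝ}
    (hv : ∀ t ∈ Ico a b, LipschitzOnWith L (v t) s)
    (hy : ContinuousOn y (Icc a b)) (hy' : ∀ t ∈ Ico a b, HasDerivWithinAt y (v t (y t)) (Ici t) t)
    (hys : ∀ t ∈ Ico a b, closedBall (y t) ε ⊆ s)
    (hz : ContinuousOn z (Icc a b)) (hz' : ∀ t ∈ Ico a b, HasDerivWithinAt z (v t (z t)) (Ici t) t)
    (ha : dist (z a) (y a) * exp (L * (b - a)) < ε) :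
    ∀ t ∈ Icc a b, dist (z t) (y t) < ε := by
  by_contra! hbad
  set bad := {t ∈ Icc a b | ε ≤ dist (z t) (y t)}
  have hclosed : IsClosed bad := (continuous_dist.comp_continuousOn (hz.prodMk hy)
    ).preimage_isClosed_of_isClosed isClosed_Icc isClosed_Ici
  have hbdd : BddBelow bad := ⟨a, fun u hu => hu.1.1⟩
  set t₂ := sInf bad
  obtain ⟨⟨hat₂, ht₂b⟩, hεt₂⟩ : t₂ ∈ bad := hclosed.csInf_mem hbad hbdd
  have hgood : ∀ u ∈ Ico a t₂, dist (z u) (y u) < ε := fun u hu =>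
    not_le.1 fun h => (csInf_le hbdd ⟨⟨hu.1, hu.2.le.trans ht₂b⟩, h⟩).not_gt hu.2
  have hε : 0 ≤ ε := (by positivity : 0 ≤ dist (z a) (y a) * exp (L * (b - a))).trans ha.le
  have hIco : Ico a t₂ ⊆ Ico a b := Ico_subset_Ico_right ht₂b
  have hIcc : Icc a t₂ ⊆ Icc a b := Icc_subset_Icc_right ht₂b
  have hgronwall := dist_le_of_trajectories_ODE_of_mem (s := fun _ => s)
    (fun u hu => hv u (hIco hu)) (hz.mono hIcc) (fun u hu => hz' u (hIco hu))
    (fun u hu => hys u (hIco hu) (mem_closedBall.2 (hgood u hu).le))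
    (hy.mono hIcc) (fun u hu => hy' u (hIco hu))
    (fun u hu => hys u (hIco hu) (mem_closedBall_self hε)) le_rfl t₂ (right_mem_Icc.2 hat₂)
  have hexp : exp (L * (t₂ - a)) ≤ exp (L * (b - a)) := by gcongr
  nlinarith [dist_nonneg (x := z a) (y := y a)]

/-- The right-hand side of the `θ`-equation in (1.5), with `F` in place of `f'`. -/
noncomputable def angularSpeed (n : ℕ) (F : ℝ → ℝ) (x r θ : ℝ) : ℝ :=
  (((n : ℝ) - 1) / r - r / 2 * F (x ^ 2 + r ^ 2)) * cos θ + x / 2 * F (x ^ 2 + r ^ 2) * sin θ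

noncomputable def arcLengthField (n : ℕ) (F : ℝ → ℝ) (p : ℝ × ℝ × ℝ) : ℝ × ℝ × ℝ :=
  (cos p.2.2, sin p.2.2, angularSpeed n F p.1 p.2.1 p.2.2)

lemma angularSpeed_of_cos_eq_zero {n : ℕ} {F : ℝ → ℝ} {x r θ : ℝ} (h : cos θ = 0) :
    angularSpeed n F x r θ = x / 2 * F (x ^ 2 + r ^ 2) * sin θ := by
  simp [angularSpeed, h]

lemma contDiffOn_arcLengthField (n : ℕ) {F : ℝ → ℝ} (hF : ContDiff ℝ 1 F) :
    ContDiffOn ℝ 1 (arcLengthField n F) {p | 0 < p.2.1} := by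
  unfold arcLengthField angularSpeed
  fun_prop (disch := exact fun p hp => ne_of_gt hp)

lemma locallyLipschitzOn_arcLengthField (n : ℕ) {F : ℝ → ℝ} (hF : ContDiff ℝ 1 F) :
    LocallyLipschitzOn {p : ℝ × ℝ × ℝ | 0 < p.2.1} (arcLengthField n F) :=
  (contDiffOn_arcLengthField n hF).locallyLipschitzOn
    (convex_halfSpace_gt (LinearMap.fst ℝ ℝ ℝ ∘ₗ LinearMap.snd ℝ ℝ (ℝ × ℝ)).isLinear 0)

lemma SolvesSystem.hasDerivAt_trajectory {n : ℕ} {f x r θ : ℝ → ℝ} {s : Set ℝ}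
    (h : SolvesSystem n f x r θ s) {t : ℝ} (ht : t ∈ s) :
    HasDerivAt (fun t => (x t, r t, θ t)) (arcLengthField n (deriv f) (x t, r t, θ t)) t :=
  let ⟨hx, hr, hθ⟩ := h t ht
  hx.prodMk (hr.prodMk hθ)

structure IsSolutionBeforeExit (n : ℕ) (f : ℝ → ℝ) (R : ℝ) (x r θ : ℝ → ℝ) (T : ℝ) : Prop where
  x_zero : x 0 = 0
  r_zero : r 0 = R
  angle_zero : θ 0 = 0
  T_pos : 0 < T
  solves : SolvesSystem n f x r θ (Icc 0 T)
  noExit : NoExit x r θ (Ioo 0 T)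

namespace IsSolutionBeforeExit

variable {n : ℕ} {f : ℝ → ℝ} {R : ℝ} {x r θ : ℝ → ℝ} {T : ℝ}
  (h : IsSolutionBeforeExit n f R x r θ T)
include h

lemma continuousOn_x : ContinuousOn x (Icc 0 T) :=
  fun t ht => (h.solves t ht).1.continuousAt.continuousWithinAt

lemma continuousOn_r : ContinuousOn r (Icc 0 T) :=
  fun t ht => (h.solves t ht).2.1.continuousAt.continuousWithinAt

lemma continuousOn_angle : ContinuousOn θ (Icc 0 T) :=
  fun t ht => (h.solves t ht).2.2.continuousAt.continuousWithinAt

lemma x_pos : ∀ t ∈ Ioo 0 T, 0 < x t := by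
  have hx' : HasDerivAt x 1 0 := by
    simpa [h.angle_zero] using (h.solves 0 (left_mem_Icc.2 h.T_pos.le)).1
  obtain ⟨s, hs, hxs⟩ := hx'.exists_mem_Ioo_pos one_pos h.x_zero h.T_pos
  exact isPreconnected_Ioo.forall_pos_of_ne_zero (h.continuousOn_x.mono Ioo_subset_Icc_self)
    (fun u hu => (h.noExit u hu).2.2.1) hs hxs

lemma r_pos (hR : 0 < R) : ∀ t ∈ Ico 0 T, 0 < r t := by
  have hne : ∀ u ∈ Ico 0 T, r u ≠ 0 := by
    rintro u ⟨hu, huT⟩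
    rcases hu.eq_or_lt with rfl | hu
    · exact h.r_zero ▸ hR.ne'
    · exact (h.noExit u ⟨hu, huT⟩).2.2.2
  exact isPreconnected_Ico.forall_pos_of_ne_zero (h.continuousOn_r.mono Ico_subset_Icc_self) hne
    (left_mem_Ico.2 h.T_pos) (h.r_zero ▸ hR)

lemma neg_pi_lt_angle : ∀ t ∈ Ico 0 T, -π < θ t := by
  have hne : ∀ u ∈ Ico 0 T, θ u + π ≠ 0 := by
    rintro u ⟨hu, huT⟩
    rcases hu.eq_or_lt with rfl | hu
    · simp [h.angle_zero, pi_ne_zero]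
    · exact fun hu' => (h.noExit u ⟨hu, huT⟩).2.1 (by linarith)
  intro t ht
  have := isPreconnected_Ico.forall_pos_of_ne_zero (g := fun u => θ u + π)
    ((h.continuousOn_angle.mono Ico_subset_Icc_self).add continuousOn_const) hne
    (left_mem_Ico.2 h.T_pos) (by simp [h.angle_zero, pi_pos]) t ht
  linarith

lemma x_pos_of_cos_angle_eq_zero {t : ℝ} (ht : t ∈ Ico 0 T) (hcos : cos (θ t) = 0) : 0 < x t := by
  rcases ht.1.eq_or_lt with rfl | ht₀
  · simp [h.angle_zero] at hcos
  · exact h.x_pos t ⟨ht₀, ht.2⟩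

lemma angle_le_of_sin_eq_neg_one (hF : ∀ s, 0 < deriv f s) {c a : ℝ} (hc : sin c = -1)
    (ha : 0 ≤ a) (hθa : θ a ≤ c) : ∀ t ∈ Icc a T, θ t ≤ c := by
  have hcos : cos c = 0 := by nlinarith [sin_sq_add_cos_sq c, sq_nonneg (cos c)]
  refine image_le_of_deriv_right_lt_deriv_boundary (B := fun _ => c) (B' := fun _ => 0)
    (h.continuousOn_angle.mono (Icc_subset_Icc_left ha))
    (fun t ht => (h.solves t ⟨ha.trans ht.1, ht.2.le⟩).2.2.hasDerivWithinAt) hθa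
    (fun _ => hasDerivAt_const _ _) ?_
  intro t ht hθt
  have hx := h.x_pos_of_cos_angle_eq_zero ⟨ha.trans ht.1, ht.2⟩ (hθt ▸ hcos)
  change angularSpeed n (deriv f) (x t) (r t) (θ t) < 0
  rw [angularSpeed_of_cos_eq_zero (hθt ▸ hcos), hθt, hc]
  have := hF (x t ^ 2 + r t ^ 2)
  nlinarith

lemma le_angle_of_sin_eq_one (hF : ∀ s, 0 < deriv f s) {c a : ℝ} (hc : sin c = 1)
    (ha : 0 ≤ a) (hθa : c ≤ θ a) : ∀ t ∈ Icc a T, c ≤ θ t := by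
  have hcos : cos c = 0 := by nlinarith [sin_sq_add_cos_sq c, sq_nonneg (cos c)]
  refine image_le_of_deriv_right_lt_deriv_boundary' (f := fun _ => c) (f' := fun _ => 0)
    continuousOn_const (fun _ _ => hasDerivWithinAt_const _ _ _) hθa
    (h.continuousOn_angle.mono (Icc_subset_Icc_left ha))
    (fun t ht => (h.solves t ⟨ha.trans ht.1, ht.2.le⟩).2.2.hasDerivWithinAt) ?_
  intro t ht hθt
  have hx := h.x_pos_of_cos_angle_eq_zero ⟨ha.trans ht.1, ht.2⟩ (hθt ▸ hcos)
  change 0 < angularSpeed n (deriv f) (x t) (r t) (θ t)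
  rw [angularSpeed_of_cos_eq_zero (hθt ▸ hcos), ← hθt, hc]
  have := hF (x t ^ 2 + r t ^ 2)
  positivity

lemma angle_le_three_pi_div_two (hF : ∀ s, 0 < deriv f s) : ∀ t ∈ Icc 0 T, θ t ≤ 3 * π / 2 :=
  h.angle_le_of_sin_eq_neg_one hF (by rw [show 3 * π / 2 = π / 2 + π by ring]; simp) le_rfl
    (by rw [h.angle_zero]; positivity)

lemma cos_angle_nonpos_of_cos_angle_nonpos (hF : ∀ s, 0 < deriv f s) {t₁ : ℝ}
    (ht₁ : t₁ ∈ Ico 0 T) (hcos : cos (θ t₁) ≤ 0) : ∀ t ∈ Ico t₁ T, cos (θ t) ≤ 0 := by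
  intro t ht
  have hlow := h.neg_pi_lt_angle t ⟨ht₁.1.trans ht.1, ht.2⟩
  rcases le_or_gt (θ t₁) (-(π / 2)) with hθ₁ | hθ₁
  · have hup := h.angle_le_of_sin_eq_neg_one hF (by simp) ht₁.1 hθ₁ t ⟨ht.1, ht.2.le⟩
    rw [← cos_neg]
    exact cos_nonpos_of_pi_div_two_le_of_le (by linarith) (by linarith)
  · have hθ₁' : π / 2 ≤ θ t₁ := by
      by_contra! hθ₁'
      exact hcos.not_gt (cos_pos_of_mem_Ioo ⟨hθ₁, hθ₁'⟩)
    have hup := h.angle_le_three_pi_div_two hF t ⟨ht₁.1.trans ht.1, ht.2.le⟩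
    exact cos_nonpos_of_pi_div_two_le_of_le
      (h.le_angle_of_sin_eq_one hF (by simp) ht₁.1 hθ₁' t ⟨ht.1, ht.2.le⟩) (by linarith)

lemma x_le_of_cos_angle_nonpos (hF : ∀ s, 0 < deriv f s) {t₁ : ℝ} (ht₁ : t₁ ∈ Ico 0 T)
    (hcos : cos (θ t₁) ≤ 0) {t : ℝ} (ht : t ∈ Icc t₁ T) : x t ≤ x t₁ := by
  have hsub : Icc t₁ T ⊆ Icc 0 T := Icc_subset_Icc_left ht₁.1
  have hderiv : ∀ u ∈ interior (Icc t₁ T), HasDerivAt x (cos (θ u)) u := by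
    rw [interior_Icc]
    exact fun u hu => (h.solves u (hsub (Ioo_subset_Icc_self hu))).1
  refine antitoneOn_of_deriv_nonpos (convex_Icc _ _) (h.continuousOn_x.mono hsub)
    (fun u hu => (hderiv u hu).differentiableAt.differentiableWithinAt) (fun u hu => ?_)
    (left_mem_Icc.2 ht₁.2.le) ht ht.1
  rw [(hderiv u hu).deriv]
  rw [interior_Icc] at hu
  exact h.cos_angle_nonpos_of_cos_angle_nonpos hF ht₁ hcos u ⟨hu.1.le, hu.2⟩

lemma exists_cos_angle_neg (hxT : x T = 0) : ∃ t₁ ∈ Ioo 0 T, cos (θ t₁) < 0 := by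
  have hT := h.T_pos
  obtain ⟨c, hc, hslope⟩ := exists_hasDerivAt_eq_slope x (fun t => cos (θ t)) (half_lt_self hT)
    (h.continuousOn_x.mono (Icc_subset_Icc_left (half_pos hT).le))
    (fun t ht => (h.solves t ⟨(half_pos hT).le.trans ht.1.le, ht.2.le⟩).1)
  have hx := h.x_pos (T / 2) ⟨half_pos hT, half_lt_self hT⟩
  refine ⟨c, ⟨(half_pos hT).trans hc.1, hc.2⟩, ?_⟩
  rw [hslope, hxT]
  exact div_neg_of_neg_of_pos (by linarith) (by linarith)

end IsSolutionBeforeExit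

namespace IsSolutionBeforeExit

variable {n : ℕ} {f : ℝ → ℝ} {R₀ : ℝ} {x₀ r₀ θ₀ : ℝ → ℝ} {T₀ : ℝ}

theorem exists_dist_trajectory_lt_of_near (hF₁ : ContDiff ℝ 1 (deriv f)) (hR₀ : 0 < R₀)
    (h₀ : IsSolutionBeforeExit n f R₀ x₀ r₀ θ₀ T₀) {t₁ : ℝ} (ht₁ : t₁ < T₀) {ε : ℝ}
    (hε : 0 < ε) :
    ∃ δ > 0, ∀ R x r θ T, IsSolutionBeforeExit n f R x r θ T → |R - R₀| < δ →
      ∀ u ∈ Icc 0 (min T t₁), dist (x u, r u, θ u) (x₀ u, r₀ u, θ₀ u) < ε := by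
  set y : ℝ → ℝ × ℝ × ℝ := fun t => (x₀ t, r₀ t, θ₀ t)
  have hsub : Icc 0 t₁ ⊆ Icc 0 T₀ := Icc_subset_Icc_right ht₁.le
  have hy' : ∀ u ∈ Icc 0 t₁, HasDerivAt y (arcLengthField n (deriv f) (y u)) u :=
    fun u hu => h₀.solves.hasDerivAt_trajectory (hsub hu)
  have hS : IsCompact (y '' Icc 0 t₁) :=
    isCompact_Icc.image_of_continuousOn fun u hu => (hy' u hu).continuousAt.continuousWithinAt
  have hSU : y '' Icc 0 t₁ ⊆ {p | 0 < p.2.1} := by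
    rintro _ ⟨u, hu, rfl⟩
    exact h₀.r_pos hR₀ u ⟨hu.1, hu.2.trans_lt ht₁⟩
  obtain ⟨ε₀, hε₀, hKU⟩ := hS.exists_cthickening_subset_open
    (isOpen_lt continuous_const (by fun_prop)) hSU
  obtain ⟨L, hL⟩ := ((locallyLipschitzOn_arcLengthField n hF₁).mono hKU
    ).exists_lipschitzOnWith_of_compact hS.cthickening
  set ε' := min ε ε₀
  refine ⟨ε' * exp (-(L * t₁)), by positivity, fun R x r θ T h hR u hu => ?_⟩
  have hsubT : Icc 0 (min T t₁) ⊆ Icc 0 T := Icc_subset_Icc_right (min_le_left _ _)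
  have hsub₁ : Icc 0 (min T t₁) ⊆ Icc 0 t₁ := Icc_subset_Icc_right (min_le_right _ _)
  have hz' : ∀ u ∈ Icc 0 (min T t₁),
      HasDerivAt (fun t => (x t, r t, θ t)) (arcLengthField n (deriv f) (x u, r u, θ u)) u :=
    fun u hu => h.solves.hasDerivAt_trajectory (hsubT hu)
  have hdist₀ : dist (x 0, r 0, θ 0) (y 0) = |R - R₀| := by
    simp [y, Prod.dist_eq, h.x_zero, h.r_zero, h.angle_zero, h₀.x_zero, h₀.r_zero,
      h₀.angle_zero, Real.dist_eq]
  refine lt_of_lt_of_le (dist_lt_of_trajectories_ODE_of_closedBall_subset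
    (v := fun _ => arcLengthField n (deriv f)) (fun _ _ => hL)
    (fun u hu => (hy' u (hsub₁ hu)).continuousAt.continuousWithinAt)
    (fun u hu => (hy' u (hsub₁ (Ico_subset_Icc_self hu))).hasDerivWithinAt)
    (fun u hu => (closedBall_subset_closedBall (min_le_right _ _)).trans
      (closedBall_subset_cthickening (mem_image_of_mem y (hsub₁ (Ico_subset_Icc_self hu))) _))
    (fun u hu => (hz' u hu).continuousAt.continuousWithinAt)
    (fun u hu => (hz' u (Ico_subset_Icc_self hu)).hasDerivWithinAt) ?_ u hu) (min_le_left _ _)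
  calc dist (x 0, r 0, θ 0) (y 0) * exp (L * (min T t₁ - 0))
      ≤ |R - R₀| * exp (L * t₁) := by
        rw [hdist₀, sub_zero]; gcongr; exact min_le_right _ _
    _ < ε' * exp (-(L * t₁)) * exp (L * t₁) := by gcongr
    _ = ε' := by rw [mul_assoc, ← exp_add, neg_add_cancel, exp_zero, mul_one]

theorem exists_forall_x_le_of_near (hF₁ : ContDiff ℝ 1 (deriv f)) (hF : ∀ s, 0 < deriv f s)
    (hR₀ : 0 < R₀) (h₀ : IsSolutionBeforeExit n f R₀ x₀ r₀ θ₀ T₀) (hxT₀ : x₀ T₀ = 0) :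
    ∃ δ > 0, ∃ B, ∀ R x r θ T, IsSolutionBeforeExit n f R x r θ T → |R - R₀| < δ →
      ∀ t ∈ Ioo 0 T, x t ≤ B := by
  obtain ⟨t₁, ht₁, hcos₁⟩ := h₀.exists_cos_angle_neg hxT₀
  obtain ⟨B, hB⟩ := isCompact_Icc.bddAbove_image
    (h₀.continuousOn_x.mono (Icc_subset_Icc_right ht₁.2.le))
  obtain ⟨δ, hδ, hclose⟩ :=
    h₀.exists_dist_trajectory_lt_of_near hF₁ hR₀ ht₁.2 (neg_pos.2 hcos₁)
  refine ⟨δ, hδ, B - cos (θ₀ t₁), fun R x r θ T h hR t ht => ?_⟩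
  have hx_le : ∀ u ∈ Icc 0 (min T t₁), x u ≤ B - cos (θ₀ t₁) := fun u hu => by
    have hxu := (abs_le.1 ((Prod.abs_sub_fst_le_dist _ _).trans (hclose R x r θ T h hR u hu).le)).2
    have hx₀u := hB (mem_image_of_mem x₀ (Icc_subset_Icc_right (min_le_right _ _) hu))
    change x u - x₀ u ≤ _ at hxu
    linarith
  rcases le_or_gt t t₁ with htt₁ | ht₁t
  · exact hx_le t ⟨ht.1.le, le_min ht.2.le htt₁⟩
  · have ht₁σ : t₁ ∈ Icc 0 (min T t₁) := ⟨ht₁.1.le, le_min (ht₁t.trans ht.2).le le_rfl⟩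
    have hcos : cos (θ t₁) ≤ 0 := by
      have hθ₁ := (Prod.abs_sub_snd_snd_le_dist _ _).trans_lt (hclose R x r θ T h hR t₁ ht₁σ)
      have := (abs_le.1 ((abs_cos_sub_cos_le (θ t₁) (θ₀ t₁)).trans hθ₁.le)).2
      linarith
    calc x t ≤ x t₁ :=
          h.x_le_of_cos_angle_nonpos hF ⟨ht₁.1.le, ht₁t.trans ht.2⟩ hcos ⟨ht₁t.le, ht.2.le⟩
      _ ≤ B - cos (θ₀ t₁) := hx_le t₁ ht₁σ

end IsSolutionBeforeExit

theorem sup_x_finite_general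
    (n : ℕ) (m : ℝ) (hm : 0 < m)
    (f : ℝ → ℝ) (hf : ContDiff ℝ 2 f)
    (hlow : ∀ s : ℝ, m ≤ deriv f s)
    (Rstar : ℝ) (hRstar : 0 < Rstar)
    (X Rr Θ : ℝ → ℝ → ℝ) (T : ℝ → ℝ)
    (hsol : ∀ R ∈ Set.Ici Rstar,
      X R 0 = 0 ∧ Rr R 0 = R ∧ Θ R 0 = 0 ∧ 0 < T R ∧
      SolvesSystem n f (X R) (Rr R) (Θ R) (Set.Icc 0 (T R)) ∧
      NoExit (X R) (Rr R) (Θ R) (Set.Ioo 0 (T R)) ∧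
      X R (T R) = 0) :
    ∃ B : ℝ, ∀ R ∈ Set.Icc Rstar (Rstar + 1), ∀ t ∈ Set.Ioo 0 (T R), X R t ≤ B := by
  have hF : ∀ s, 0 < deriv f s := fun s => hm.trans_le (hlow s)
  have hsol' : ∀ R ∈ Ici Rstar,
      IsSolutionBeforeExit n f R (X R) (Rr R) (Θ R) (T R) ∧ X R (T R) = 0 :=
    fun R hR =>
      let ⟨hx, hr, hθ, hT, hsys, hexit, hxT⟩ := hsol R hR
      ⟨⟨hx, hr, hθ, hT, hsys, hexit⟩, hxT⟩
  refine isCompact_Icc.exists_forall_of_local (P := fun R B => ∀ t ∈ Ioo 0 (T R), X R t ≤ B)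
    (fun R B B' hBB' hB t ht => (hB t ht).trans hBB') fun R₀ hR₀ => ?_
  obtain ⟨h₀, hxT₀⟩ := hsol' R₀ hR₀.1
  obtain ⟨δ, hδ, B, hB⟩ :=
    h₀.exists_forall_x_le_of_near hf.deriv' hF (hRstar.trans_le hR₀.1) hxT₀
  refine ⟨_, inter_mem_nhdsWithin _ (ball_mem_nhds R₀ hδ), B, fun R hR => ?_⟩
  exact hB R _ _ _ _ (hsol' R hR.1.1).1 (mem_ball_iff_norm.1 hR.2)

/-- If for every `R ≥ R*` the solution of (1.5)–(1.6) has a finite first exit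
time `T R` with `x_R(T R) = 0`, then
`sup { x_R(t) : 0 < t < T R, R ∈ [R*, R*+1] } < +∞`. -/
theorem sup_x_finite
    (n : ℕ) (hn : 2 ≤ n) (m M : ℝ) (hm : 0 < m) (hmM : m ≤ M)
    (f : ℝ → ℝ) (hf : ContDiff ℝ 2 f)
    (hconv : ∀ s : ℝ, 0 ≤ deriv (deriv f) s)
    (hlow : ∀ s : ℝ, m ≤ deriv f s) (hup : ∀ s : ℝ, deriv f s ≤ M)
    (Rstar : ℝ) (hRstar : 0 < Rstar)
    (X Rr Θ : ℝ → ℝ → ℝ) (T : ℝ → ℝ)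
    (hsol : ∀ R ∈ Set.Ici Rstar,
      X R 0 = 0 ∧ Rr R 0 = R ∧ Θ R 0 = 0 ∧ 0 < T R ∧
      SolvesSystem n f (X R) (Rr R) (Θ R) (Set.Icc 0 (T R)) ∧
      NoExit (X R) (Rr R) (Θ R) (Set.Ioo 0 (T R)) ∧
      X R (T R) = 0) :
    ∃ B : ℝ, ∀ R ∈ Set.Icc Rstar (Rstar + 1), ∀ t ∈ Set.Ioo 0 (T R), X R t ≤ B :=
  sup_x_finite_general n m hm f hf hlow Rstar hRstar X Rr Θ T hsol
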